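/- Let X₁, …, X_{k−1} be i.i.d. uniform random variables on [0, 2t₀] with t₀ > 0, let X_max = max_i X_i, and let t_u satisfy 0 < t_u ≤ 2t₀. Then P(|X_i − X_max| ≤ t_u for all i) = 2^{−(k−1)} ((t_u/t₀)^{k−1} + (k−1)(t_u/t₀)^{k−2}(2 − t_u/t₀)), which equals 2^{−(k−1)} (t_u/t₀)^{k−2} ((2−k)(t_u/t₀) + 2(k−1)). -/

import Mathlib

open MeasureTheory ProbabilityTheory

/-- The uniform measure on `[0, L]`. -/
noncomputable def unifM (L : ℝ) : Measure ℝ :=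
  (ENNReal.ofReal L)⁻¹ • volume.restrict (Set.Icc 0 L)

lemma unifM_prob {L : ℝ} (hL : 0 < L) : IsProbabilityMeasure (unifM L) := by
  constructor
  rw [unifM, Measure.smul_apply, Measure.restrict_apply MeasurableSet.univ, Set.univ_inter,
    Real.volume_Icc, sub_zero, smul_eq_mul, ENNReal.inv_mul_cancel]
  · simp [ENNReal.ofReal_pos, hL]
  · exact ENNReal.ofReal_ne_top

lemma unifM_noAtoms {L : ℝ} : NoAtoms (unifM L) := by
  constructor
  intro x
  rw [unifM, Measure.smul_apply, Measure.restrict_apply (measurableSet_singleton x),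
    smul_eq_mul]
  have : volume ({x} ∩ Set.Icc 0 L) = 0 :=
    measure_mono_null Set.inter_subset_left (Real.volume_singleton)
  rw [this, mul_zero]

lemma unifM_Icc {L tu : ℝ} (hL : 0 < L) (htu : 0 ≤ tu) {a : ℝ} (ha : 0 ≤ a) (haL : a ≤ L) :
    unifM L (Set.Icc a (a + tu)) = ENNReal.ofReal ((min (a + tu) L - a) / L) := by
  rw [unifM, Measure.smul_apply, Measure.restrict_apply measurableSet_Icc,
    Set.Icc_inter_Icc, smul_eq_mul, Real.volume_Icc]
  have h1 : a ⊔ 0 = a := sup_eq_left.2 ha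
  rw [h1, ENNReal.ofReal_div_of_pos hL, ENNReal.div_eq_inv_mul]

lemma measure_Ei {L tu : ℝ} (hL : 0 < L) (htu : 0 ≤ tu) (m : ℕ) (i : Fin (m + 1)) :
    Measure.pi (fun _ : Fin (m + 1) => unifM L)
      {x | (∀ j, j < i → x i < x j) ∧ ∀ j, x i ≤ x j ∧ x j ≤ x i + tu}
    = ∫⁻ a, (unifM L (Set.Icc a (a + tu))) ^ m ∂(unifM L) := by
  haveI := unifM_prob hL
  haveI := unifM_noAtoms (L := L)
  set T : Set (ℝ × (Fin m → ℝ)) :=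
    {p | ∀ j, (i.succAbove j < i → p.1 < p.2 j) ∧ p.1 ≤ p.2 j ∧ p.2 j ≤ p.1 + tu} with hT
  have hTmeas : MeasurableSet T := by
    have : T = ⋂ j, {p : ℝ × (Fin m → ℝ) |
        (i.succAbove j < i → p.1 < p.2 j) ∧ p.1 ≤ p.2 j ∧ p.2 j ≤ p.1 + tu} := by
      ext p; simp [hT, Set.mem_iInter]
    rw [this]
    refine MeasurableSet.iInter fun j => ?_
    have h2j : Measurable fun p : ℝ × (Fin m → ℝ) => p.2 j :=
      (measurable_pi_apply j).comp measurable_snd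
    have hA : MeasurableSet {p : ℝ × (Fin m → ℝ) | i.succAbove j < i → p.1 < p.2 j} := by
      by_cases hc : i.succAbove j < i
      · simp only [hc, true_implies]
        exact measurableSet_lt measurable_fst h2j
      · simp only [hc, false_implies, Set.setOf_true]
        exact MeasurableSet.univ
    simp only [Set.setOf_and]
    exact hA.inter ((measurableSet_le measurable_fst h2j).inter
      (measurableSet_le h2j (measurable_fst.add_const tu)))
  have hE : {x : Fin (m + 1) → ℝ | (∀ j, j < i → x i < x j) ∧ ∀ j, x i ≤ x j ∧ x j ≤ x i + tu}
      = (MeasurableEquiv.piFinSuccAbove (fun _ => ℝ) i) ⁻¹' T := by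
    ext x
    have happ : (MeasurableEquiv.piFinSuccAbove (fun _ : Fin (m+1) => ℝ) i) x
        = (x i, fun j => x (i.succAbove j)) := rfl
    simp only [Set.mem_preimage, happ, hT, Set.mem_setOf_eq]
    constructor
    · rintro ⟨h1, h2⟩ j
      exact ⟨fun hc => h1 _ hc, (h2 _).1, (h2 _).2⟩
    · intro h
      constructor
      · intro j hj
        rcases Fin.exists_succAbove_eq (x := j) (y := i) (ne_of_lt hj) with ⟨j', rfl⟩
        exact (h j').1 hj
      · intro j
        rcases eq_or_ne j i with rfl | hne
        · exact ⟨le_refl _, le_add_of_nonneg_right htu⟩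
        · rcases Fin.exists_succAbove_eq (x := j) (y := i) hne with ⟨j', rfl⟩
          exact ⟨(h j').2.1, (h j').2.2⟩
  rw [hE, (measurePreserving_piFinSuccAbove (fun _ : Fin (m + 1) => unifM L) i).measure_preimage
    hTmeas.nullMeasurableSet, Measure.prod_apply hTmeas]
  refine lintegral_congr fun a => ?_
  have hslice : Prod.mk a ⁻¹' T
      = Set.pi Set.univ (fun j => if i.succAbove j < i then Set.Ioc a (a + tu)
          else Set.Icc a (a + tu)) := by
    ext y
    simp only [Set.mem_preimage, hT, Set.mem_setOf_eq, Set.mem_pi, Set.mem_univ, true_implies]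
    refine forall_congr' fun j => ?_
    by_cases hc : i.succAbove j < i
    · simp only [hc, if_true, true_implies, Set.mem_Ioc]
      exact ⟨fun h => ⟨h.1, h.2.2⟩, fun h => ⟨h.1, h.1.le, h.2⟩⟩
    · simp only [hc, if_false, false_implies, true_and, Set.mem_Icc]
  rw [hslice, Measure.pi_pi]
  have hfac : ∀ j : Fin m, unifM L (if i.succAbove j < i then Set.Ioc a (a + tu)
      else Set.Icc a (a + tu)) = unifM L (Set.Icc a (a + tu)) := by
    intro j
    by_cases hc : i.succAbove j < i
    · simp only [hc, if_true]
      exact measure_congr (Ioc_ae_eq_Icc' (@NullSingletonClass.measure_singleton _ _ (unifM L) unifM_noAtoms _))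
    · simp only [hc, if_false]
  rw [Finset.prod_congr rfl (fun j _ => hfac j), Finset.prod_const, Finset.card_univ,
    Fintype.card_fin]

lemma lint_key {L tu : ℝ} (hL : 0 < L) (htu : 0 < tu) (h2 : tu ≤ L) (m : ℕ) :
    ∫⁻ a, (unifM L (Set.Icc a (a + tu))) ^ m ∂(unifM L)
    = ENNReal.ofReal (((L - tu) * tu ^ m + tu ^ (m + 1) / (m + 1)) / L ^ (m + 1)) := by
  have hcont : Continuous fun a : ℝ => (min (a + tu) L - a) ^ m :=
    (((continuous_id.add continuous_const).min continuous_const).sub continuous_id).pow m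
  set f : ℝ → ENNReal := fun a => (unifM L (Set.Icc a (a + tu))) ^ m with hf
  have hsm : ∫⁻ a, f a ∂(unifM L)
      = (ENNReal.ofReal L)⁻¹ * ∫⁻ a in Set.Icc 0 L, f a := by
    rw [unifM, lintegral_smul_measure, smul_eq_mul]
  rw [hsm]
  have hcongr : ∫⁻ a in Set.Icc 0 L, f a
      = ∫⁻ a in Set.Icc 0 L, ENNReal.ofReal (((min (a + tu) L - a)) ^ m / L ^ m) := by
    refine setLIntegral_congr_fun measurableSet_Icc (fun a ha => ?_)
    rw [hf]
    simp only
    rw [unifM_Icc hL htu.le ha.1 ha.2]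
    have hnn : 0 ≤ min (a + tu) L - a :=
      sub_nonneg.2 (le_min (le_add_of_nonneg_right htu.le) ha.2)
    rw [← ENNReal.ofReal_pow (div_nonneg hnn hL.le), div_pow]
  rw [hcongr]
  have hint : IntegrableOn (fun a : ℝ => (min (a + tu) L - a) ^ m / L ^ m) (Set.Icc 0 L) :=
    ((hcont.div_const _).integrableOn_Icc)
  have hnn : 0 ≤ᵐ[volume.restrict (Set.Icc 0 L)]
      fun a : ℝ => (min (a + tu) L - a) ^ m / L ^ m := by
    refine (ae_restrict_iff' measurableSet_Icc).2 (ae_of_all _ fun a ha => ?_)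
    have : 0 ≤ min (a + tu) L - a :=
      sub_nonneg.2 (le_min (le_add_of_nonneg_right htu.le) ha.2)
    positivity
  rw [← ofReal_integral_eq_lintegral_ofReal hint hnn]
  have hK : ∫ a in Set.Icc 0 L, (min (a + tu) L - a) ^ m
      = (L - tu) * tu ^ m + tu ^ (m + 1) / (m + 1) := by
    rw [MeasureTheory.integral_Icc_eq_integral_Ioc, ← intervalIntegral.integral_of_le hL.le]
    have i1 : IntervalIntegrable (fun a : ℝ => (min (a + tu) L - a) ^ m) volume 0 (L - tu) :=
      hcont.intervalIntegrable _ _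
    have i2 : IntervalIntegrable (fun a : ℝ => (min (a + tu) L - a) ^ m) volume (L - tu) L :=
      hcont.intervalIntegrable _ _
    rw [← intervalIntegral.integral_add_adjacent_intervals i1 i2]
    have h1 : ∫ a in (0 : ℝ)..(L - tu), (min (a + tu) L - a) ^ m = (L - tu) * tu ^ m := by
      rw [intervalIntegral.integral_congr (g := fun _ => tu ^ m) ?_]
      · rw [intervalIntegral.integral_const, sub_zero, smul_eq_mul]
      · intro a ha
        rw [Set.uIcc_of_le (by linarith)] at ha
        have hle : a + tu ≤ L := by linarith [ha.2]
        simp only [min_eq_left hle, add_sub_cancel_left]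
    have h2' : ∫ a in (L - tu)..L, (min (a + tu) L - a) ^ m = tu ^ (m + 1) / (m + 1) := by
      have hEq : Set.EqOn (fun a : ℝ => (min (a + tu) L - a) ^ m)
          (fun a : ℝ => (L - a) ^ m) (Set.uIcc (L - tu) L) := by
        intro a ha
        rw [Set.uIcc_of_le (by linarith)] at ha
        simp only [min_eq_right (by linarith [ha.1] : L ≤ a + tu)]
      rw [intervalIntegral.integral_congr hEq,
        intervalIntegral.integral_comp_sub_left (fun x : ℝ => x ^ m) L, sub_self,
        sub_sub_cancel, integral_pow]
      norm_num
    rw [h1, h2']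
  rw [integral_div, hK, ENNReal.ofReal_div_of_pos (by positivity : (0:ℝ) < L ^ m)]
  rw [ENNReal.div_eq_inv_mul, ← ENNReal.ofReal_inv_of_pos hL,
    ← ENNReal.ofReal_inv_of_pos (pow_pos hL m),
    ← ENNReal.ofReal_mul (by positivity), ← ENNReal.ofReal_mul (by positivity)]
  congr 1
  rw [eq_div_iff (by positivity : (L : ℝ) ^ (m + 1) ≠ 0), pow_succ]
  field_simp
  ring

lemma measure_S {L tu : ℝ} (hL : 0 < L) (htu : 0 < tu) (h2 : tu ≤ L) (m : ℕ) :
    Measure.pi (fun _ : Fin (m + 1) => unifM L) {x | ∀ i j, x i - x j ≤ tu}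
    = ENNReal.ofReal (((m + 1) * ((L - tu) * tu ^ m) + tu ^ (m + 1)) / L ^ (m + 1)) := by
  haveI := unifM_prob hL
  set E : Fin (m + 1) → Set (Fin (m + 1) → ℝ) := fun i =>
    {x | (∀ j, j < i → x i < x j) ∧ ∀ j, x i ≤ x j ∧ x j ≤ x i + tu} with hEdef
  have hunion : {x : Fin (m + 1) → ℝ | ∀ i j, x i - x j ≤ tu} = ⋃ i, E i := by
    ext x
    simp only [Set.mem_setOf_eq, Set.mem_iUnion, hEdef]
    constructor
    · intro hx
      obtain ⟨j0, _, hj0⟩ := Finset.exists_min_image Finset.univ x ⟨0, Finset.mem_univ 0⟩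
      set T : Finset (Fin (m + 1)) := Finset.univ.filter (fun j => ∀ j', x j ≤ x j') with hTdef
      have hTne : T.Nonempty :=
        ⟨j0, Finset.mem_filter.mpr ⟨Finset.mem_univ j0, fun j' => hj0 j' (Finset.mem_univ j')⟩⟩
      have himem := (Finset.mem_filter.mp (T.min'_mem hTne)).2
      refine ⟨T.min' hTne, ?_, ?_⟩
      · intro j hj
        rcases lt_or_eq_of_le (himem j) with h | h
        · exact h
        · exfalso
          have : j ∈ T :=
            Finset.mem_filter.mpr ⟨Finset.mem_univ j, fun j' => h ▸ himem j'⟩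
          exact absurd (T.min'_le j this) (not_le.2 hj)
      · intro j
        exact ⟨himem j, by linarith [hx j (T.min' hTne)]⟩
    · rintro ⟨i, _, h2'⟩ j j'
      have := (h2' j).2
      have := (h2' j').1
      linarith
  have hdisjaux : ∀ i j : Fin (m + 1), i < j → Disjoint (E i) (E j) := by
    intro i j hij
    rw [Set.disjoint_left]
    rintro x ⟨_, hi2⟩ ⟨hj1, _⟩
    have h1 := hj1 i hij
    have h2' := (hi2 j).1
    linarith
  have hdisj : Pairwise (Function.onFun Disjoint E) := by
    intro i j hne
    rcases hne.lt_or_gt with h | h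
    · exact hdisjaux i j h
    · exact (hdisjaux j i h).symm
  have hEmeas : ∀ i, MeasurableSet (E i) := by
    intro i
    have h1 : MeasurableSet {x : Fin (m + 1) → ℝ | ∀ j, j < i → x i < x j} := by
      rw [Set.setOf_forall]
      refine MeasurableSet.iInter fun j => ?_
      by_cases hc : j < i
      · simp only [hc, true_implies]
        exact measurableSet_lt (measurable_pi_apply i) (measurable_pi_apply j)
      · simp only [hc, false_implies, Set.setOf_true]
        exact MeasurableSet.univ
    have h2m : MeasurableSet {x : Fin (m + 1) → ℝ | ∀ j, x i ≤ x j ∧ x j ≤ x i + tu} := by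
      rw [Set.setOf_forall]
      refine MeasurableSet.iInter fun j => ?_
      simp only [Set.setOf_and]
      exact (measurableSet_le (measurable_pi_apply i) (measurable_pi_apply j)).inter
        (measurableSet_le (measurable_pi_apply j) (by fun_prop))
    have hsplit : E i = {x : Fin (m + 1) → ℝ | ∀ j, j < i → x i < x j}
        ∩ {x : Fin (m + 1) → ℝ | ∀ j, x i ≤ x j ∧ x j ≤ x i + tu} := by
      rw [hEdef, ← Set.setOf_and]
    rw [hsplit]
    exact h1.inter h2m
  rw [hunion, measure_iUnion hdisj hEmeas]
  have hv : ∀ i, Measure.pi (fun _ : Fin (m + 1) => unifM L) (E i)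
      = ENNReal.ofReal (((L - tu) * tu ^ m + tu ^ (m + 1) / (m + 1)) / L ^ (m + 1)) := fun i => by
    rw [hEdef]
    exact (measure_Ei hL htu.le m i).trans (lint_key hL htu h2 m)
  rw [tsum_congr hv, tsum_fintype]
  rw [Finset.sum_const, Finset.card_univ, Fintype.card_fin, nsmul_eq_mul]
  have hcast : ((m + 1 : ℕ) : ENNReal) = ENNReal.ofReal ((m : ℝ) + 1) := by
    rw [← ENNReal.ofReal_natCast]
    norm_num
  rw [hcast, ← ENNReal.ofReal_mul (by positivity)]
  congr 1
  have hm1 : ((m : ℝ) + 1) ≠ 0 := by positivity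
  field_simp

lemma event_iff {n : ℕ} (x : Fin (n + 1) → ℝ) (tu : ℝ)
    (hne : (Finset.univ : Finset (Fin (n + 1))).Nonempty) :
    (∀ i, |x i - Finset.univ.sup' hne x| ≤ tu) ↔ ∀ i j, x i - x j ≤ tu := by
  have hle : ∀ i, x i ≤ Finset.univ.sup' hne x := fun i => Finset.le_sup' x (Finset.mem_univ i)
  constructor
  · intro h i j
    have h1 := h j
    rw [abs_of_nonpos (by linarith [hle j])] at h1
    linarith [hle i]
  · intro h i
    rw [abs_of_nonpos (by linarith [hle i])]
    have : Finset.univ.sup' hne x ≤ tu + x i :=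
      Finset.sup'_le hne x (fun j _ => by linarith [h j i])
    linarith

/-- For `k−1` i.i.d. uniform random variables `X i` on `[0, 2t₀]` and `0 < t_u ≤ 2t₀`,
the probability that all `X i` lie within `t_u` of their maximum equals
`2^{−(k−1)} ((t_u/t₀)^{k−1} + (k−1)(t_u/t₀)^{k−2}(2 − t_u/t₀))`, which equals
`2^{−(k−1)} (t_u/t₀)^{k−2} ((2−k)(t_u/t₀) + 2(k−1))`. -/
theorem uniform_max_closeness {Ω : Type*} [MeasurableSpace Ω]
    (P : Measure Ω) [IsProbabilityMeasure P]
    (k : ℕ) (hk : 2 ≤ k) (t₀ tu : ℝ) (ht₀ : 0 < t₀) (htu : 0 < tu) (htu2 : tu ≤ 2 * t₀)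
    (X : Fin (k - 1) → Ω → ℝ) (hmeas : ∀ i, Measurable (X i))
    (hindep : iIndepFun X P)
    (hunif : ∀ i, P.map (X i) = (ENNReal.ofReal (2 * t₀))⁻¹ • volume.restrict (Set.Icc 0 (2 * t₀))) :
    P {ω | ∀ i, |X i ω - Finset.univ.sup' (Finset.univ_nonempty_iff.mpr ⟨⟨0, by omega⟩⟩)
        (fun j => X j ω)| ≤ tu}
      = ENNReal.ofReal ((1 / 2) ^ (k - 1) *
          ((tu / t₀) ^ (k - 1) + ((k : ℝ) - 1) * (tu / t₀) ^ (k - 2) * (2 - tu / t₀))) ∧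
    (1 / 2 : ℝ) ^ (k - 1) *
        ((tu / t₀) ^ (k - 1) + ((k : ℝ) - 1) * (tu / t₀) ^ (k - 2) * (2 - tu / t₀))
      = (1 / 2) ^ (k - 1) * (tu / t₀) ^ (k - 2) *
          ((2 - (k : ℝ)) * (tu / t₀) + 2 * ((k : ℝ) - 1)) := by
  obtain ⟨m, rfl⟩ : ∃ m, k = m + 2 := ⟨k - 2, by omega⟩
  have e1 : m + 2 - 1 = m + 1 := rfl
  have e2 : m + 2 - 2 = m := rfl
  have hL : (0:ℝ) < 2 * t₀ := by linarith
  haveI := unifM_prob hL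
  constructor
  · -- probability computation
    have hXvec : Measurable (fun ω (i : Fin (m + 1)) => X i ω) :=
      measurable_pi_lambda _ hmeas
    have hSmeas : MeasurableSet {x : Fin (m + 1) → ℝ | ∀ i j, x i - x j ≤ tu} := by
      rw [Set.setOf_forall]
      refine MeasurableSet.iInter fun i => ?_
      rw [Set.setOf_forall]
      refine MeasurableSet.iInter fun j => ?_
      exact measurableSet_le ((measurable_pi_apply i).sub (measurable_pi_apply j))
        measurable_const
    have hset : {ω | ∀ i, |X i ω - Finset.univ.sup'
          (Finset.univ_nonempty_iff.mpr ⟨⟨0, by omega⟩⟩) (fun j => X j ω)| ≤ tu}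
        = (fun ω (i : Fin (m + 1)) => X i ω) ⁻¹' {x | ∀ i j, x i - x j ≤ tu} := by
      ext ω
      simp only [Set.mem_setOf_eq, Set.mem_preimage]
      exact event_iff (fun j => X j ω) tu _
    have hmap : P.map (fun ω (i : Fin (m + 1)) => X i ω)
        = Measure.pi (fun _ => unifM (2 * t₀)) := by
      refine (Measure.pi_eq fun s hs => ?_).symm
      rw [Measure.map_apply hXvec (MeasurableSet.univ_pi hs)]
      have hpre : (fun ω (i : Fin (m + 1)) => X i ω) ⁻¹' (Set.pi Set.univ s)
          = ⋂ i, X i ⁻¹' s i := by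
        ext ω
        simp [Set.mem_pi]
      rw [hpre, hindep.meas_iInter (fun i => ⟨s i, hs i, rfl⟩)]
      exact Finset.prod_congr rfl fun i _ => by
        rw [← Measure.map_apply (hmeas i) (hs i), hunif i]
        rfl
    rw [hset, ← Measure.map_apply hXvec hSmeas, hmap,
      measure_S hL htu htu2 m]
    congr 1
    rw [e1, e2]
    have ht₀' : (t₀ : ℝ) ≠ 0 := ne_of_gt ht₀
    push_cast
    simp only [div_pow, one_div, inv_pow]
    field_simp
    ring
  · rw [e1, e2]
    push_cast
    ring
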